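/- Let φ > 0 and let M, V, C be mutually independent nonnegative random variables, where V is exponentially distributed with rate φ. Then for every real s ≥ 0 with s ≠ φ, E[exp(−s·max(C + M − V, M))] = E[exp(−sM)] · (φ·E[exp(−sC)] − s·E[exp(−φC)])/(φ − s). (This is the abstract form of the key equation E[e^{−sV}] = [q(s−Φ(q))/(Φ(q)(ψ(s)−q))]·[Φ(q)E[e^{−sF(V)}] − sE[e^{−Φ(q)F(V)}]]/(Φ(q)−s), obtained since max(C+M−V, M) = M + (C−V)⁺ and M is independent of (C,V).) -/

import Mathlib

/-!
Since `max (C + M - V) M = M + (C - V)⁺` and `M` is independent of `(C, V)`, the factor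
`E[exp(-s M)]` splits off. Conditioning on `C = c ≥ 0` and splitting the exponential density
at `v = c` gives `E[exp(-s (c - V)⁺)] = (φ exp(-s c) - s exp(-φ c)) / (φ - s)`, which is
then integrated against the law of `C`.
-/

open MeasureTheory ProbabilityTheory Real Set

lemma integral_expMeasure_eq_setIntegral_Ioi {r : ℝ} (hr : 0 < r) (f : ℝ → ℝ) :
    ∫ v, f v ∂expMeasure r = ∫ v in Ioi 0, r * exp (-(r * v)) * f v := by
  have hdensity : ∀ v, (gammaPDF 1 r v).toReal • f v
      = (Ici 0).indicator (fun v ↦ r * exp (-(r * v)) * f v) v := by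
    intro v
    rw [gammaPDF, ENNReal.toReal_ofReal (gammaPDFReal_nonneg one_pos hr v), gammaPDFReal]
    by_cases hv : 0 ≤ v <;> simp [hv]
  have hmeas : Measurable (gammaPDF 1 r) := (measurable_gammaPDFReal 1 r).ennreal_ofReal
  rw [expMeasure, gammaMeasure, integral_withDensity_eq_integral_toReal_smul hmeas
    (ae_of_all _ fun _ ↦ ENNReal.ofReal_lt_top)]
  simp_rw [hdensity]
  rw [integral_indicator measurableSet_Ici, integral_Ici_eq_integral_Ioi]

lemma integral_exp_neg_mul_max_sub_zero_expMeasure {φ s c : ℝ} (hφ : 0 < φ) (hsφ : s ≠ φ)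
    (hc : 0 ≤ c) :
    ∫ v, exp (-s * max (c - v) 0) ∂expMeasure φ =
      (φ * exp (-s * c) - s * exp (-φ * c)) / (φ - s) := by
  set g := fun v ↦ φ * exp (-(φ * v)) * exp (-s * max (c - v) 0)
  have hg_Ioc : EqOn g (fun v ↦ φ * exp (-s * c) * exp ((s - φ) * v)) (Ioc 0 c) := by
    intro v hv
    simp only [g, max_eq_left (sub_nonneg.mpr hv.2), mul_assoc, ← exp_add]
    ring_nf
  have hg_Ioi : EqOn g (fun v ↦ φ * exp (-φ * v)) (Ioi c) := by
    intro v hv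
    simp [g, max_eq_right (sub_nonpos.mpr hv.out.le)]
  have hIoc :
      ∫ v in Ioc 0 c, g v = φ * exp (-s * c) * ((exp ((s - φ) * c) - 1) / (s - φ)) := by
    rw [setIntegral_congr_fun measurableSet_Ioc hg_Ioc, ← intervalIntegral.integral_of_le hc,
      intervalIntegral.integral_const_mul,
      intervalIntegral.integral_comp_mul_left (fun v ↦ exp v) (sub_ne_zero.mpr hsφ),
      integral_exp, mul_zero, exp_zero, smul_eq_mul]
    ring
  have hIoi : ∫ v in Ioi c, g v = exp (-φ * c) := by
    rw [setIntegral_congr_fun measurableSet_Ioi hg_Ioi, integral_const_mul,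
      integral_exp_mul_Ioi (neg_lt_zero.mpr hφ)]
    field_simp
  have hg_int_Ioi : IntegrableOn g (Ioi c) :=
    IntegrableOn.congr_fun ((exp_neg_integrableOn_Ioi c hφ).const_mul φ) hg_Ioi.symm
      measurableSet_Ioi
  rw [integral_expMeasure_eq_setIntegral_Ioi hφ, ← Ioc_union_Ioi_eq_Ioi hc,
    setIntegral_union Ioc_disjoint_Ioi_same measurableSet_Ioi
      (by fun_prop : Continuous g).integrableOn_Ioc hg_int_Ioi, hIoc, hIoi]
  have hexp : exp (-s * c) * exp ((s - φ) * c) = exp (-φ * c) := by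
    rw [← exp_add]; ring_nf
  rw [← hexp]
  field_simp [sub_ne_zero.mpr hsφ, sub_ne_zero.mpr hsφ.symm]
  ring

theorem ProbabilityTheory.IndepFun.integral_comp_eq_integral_integral
    {Ω α β E : Type*} [MeasurableSpace Ω] [MeasurableSpace α] [MeasurableSpace β]
    [NormedAddCommGroup E] [NormedSpace ℝ E] {P : Measure Ω} [IsFiniteMeasure P]
    {X : Ω → α} {Y : Ω → β} (hXY : IndepFun X Y P) (hX : AEMeasurable X P)
    (hY : AEMeasurable Y P) {f : α × β → E} (hf : Integrable f ((P.map X).prod (P.map Y))) :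
    ∫ ω, f (X ω, Y ω) ∂P = ∫ ω, ∫ y, f (X ω, y) ∂(P.map Y) ∂P := by
  have hmap := (indepFun_iff_map_prod_eq_prod_map_map hX hY).mp hXY
  rw [← integral_map (hX.prodMk hY) (hmap ▸ hf.aestronglyMeasurable), hmap, integral_prod _ hf,
    integral_map hX hf.integral_prod_left.aestronglyMeasurable]

lemma integrable_exp_neg_mul_of_nonneg {Ω : Type*} [MeasurableSpace Ω] {P : Measure Ω}
    [IsFiniteMeasure P] {X : Ω → ℝ} (hX : AEMeasurable X P) (hX0 : ∀ᵐ ω ∂P, 0 ≤ X ω)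
    {t : ℝ} (ht : 0 ≤ t) : Integrable (fun ω ↦ exp (-t * X ω)) P := by
  refine Integrable.of_bound (by fun_prop) 1 ?_
  filter_upwards [hX0] with ω hω
  rw [norm_of_nonneg (exp_nonneg _), exp_le_one_iff]
  nlinarith

theorem laplace_transform_max_indep_exponential_general
    {Ω : Type*} [MeasurableSpace Ω] (P : Measure Ω) [IsProbabilityMeasure P]
    (φ : ℝ) (hφ : 0 < φ) (M V C : Ω → ℝ)
    (hM : Measurable M) (hV : Measurable V) (hC : Measurable C)
    (hCnonneg : ∀ᵐ ω ∂P, 0 ≤ C ω)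
    (hVexp : Measure.map V P = expMeasure φ)
    (hindep : iIndepFun ![M, V, C] P)
    (s : ℝ) (hs : 0 ≤ s) (hsφ : s ≠ φ) :
    ∫ ω, exp (-s * max (C ω + M ω - V ω) (M ω)) ∂P =
      (∫ ω, exp (-s * M ω) ∂P) *
        ((φ * ∫ ω, exp (-s * C ω) ∂P - s * ∫ ω, exp (-φ * C ω) ∂P) / (φ - s)) := by
  set g : ℝ × ℝ → ℝ := fun p ↦ exp (-s * max (p.1 - p.2) 0)
  have hsplit : ∀ ω, exp (-s * max (C ω + M ω - V ω) (M ω))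
      = exp (-s * M ω) * g (C ω, V ω) := by
    intro ω
    rw [← exp_add, ← mul_add, ← max_add_add_left, add_zero]
    ring_nf
  have hmeas : ∀ i, Measurable (![M, V, C] i) := fun i ↦ by fin_cases i <;> assumption
  have hM_CV : IndepFun M (fun ω ↦ (C ω, V ω)) P := by
    simpa using (hindep.indepFun_prodMk hmeas 2 1 0 (by decide) (by decide)).symm
  have hCV : IndepFun C V P := by simpa using hindep.indepFun (i := 2) (j := 1) (by decide)
  have hg_int : Integrable g ((P.map C).prod (P.map V)) :=
    Integrable.of_bound (by fun_prop) 1 (ae_of_all _ fun p ↦ by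
      rw [norm_of_nonneg (exp_nonneg _), exp_le_one_iff]
      nlinarith [le_max_right (p.1 - p.2) 0])
  have hinner : ∀ᵐ ω ∂P, ∫ v, g (C ω, v) ∂(P.map V)
      = (φ * exp (-s * C ω) - s * exp (-φ * C ω)) / (φ - s) := by
    filter_upwards [hCnonneg] with ω hω
    rw [hVexp]
    exact integral_exp_neg_mul_max_sub_zero_expMeasure hφ hsφ hω
  have hfactor : ∫ ω, exp (-s * M ω) * g (C ω, V ω) ∂P
      = (∫ ω, exp (-s * M ω) ∂P) * ∫ ω, g (C ω, V ω) ∂P :=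
    (hM_CV.comp (by fun_prop : Measurable fun x ↦ exp (-s * x))
      (by fun_prop : Measurable g)).integral_fun_mul_eq_mul_integral (by fun_prop) (by fun_prop)
  simp only [hsplit]
  rw [hfactor,
    hCV.integral_comp_eq_integral_integral hC.aemeasurable hV.aemeasurable hg_int,
    integral_congr_ae hinner, integral_div,
    integral_sub ((integrable_exp_neg_mul_of_nonneg hC.aemeasurable hCnonneg hs).const_mul φ)
      ((integrable_exp_neg_mul_of_nonneg hC.aemeasurable hCnonneg hφ.le).const_mul s),
    integral_const_mul, integral_const_mul]

/-- Key equation in abstract form: if `M, V, C` are mutually independent nonnegative random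
variables with `V` exponential of rate `φ > 0`, then for `0 ≤ s`, `s ≠ φ`,
`E[exp(-s max(C + M - V, M))]
  = E[exp(-s M)] (φ E[exp(-s C)] - s E[exp(-φ C)]) / (φ - s)`. -/
theorem laplace_transform_max_indep_exponential
    {Ω : Type*} [MeasurableSpace Ω] (P : Measure Ω) [IsProbabilityMeasure P]
    (φ : ℝ) (hφ : 0 < φ) (M V C : Ω → ℝ)
    (hM : Measurable M) (hV : Measurable V) (hC : Measurable C)
    (hMnonneg : ∀ᵐ ω ∂P, 0 ≤ M ω) (hCnonneg : ∀ᵐ ω ∂P, 0 ≤ C ω)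
    (hVexp : Measure.map V P = expMeasure φ)
    (hindep : iIndepFun ![M, V, C] P)
    (s : ℝ) (hs : 0 ≤ s) (hsφ : s ≠ φ) :
    ∫ ω, exp (-s * max (C ω + M ω - V ω) (M ω)) ∂P =
      (∫ ω, exp (-s * M ω) ∂P) *
        ((φ * ∫ ω, exp (-s * C ω) ∂P - s * ∫ ω, exp (-φ * C ω) ∂P) / (φ - s)) :=
  laplace_transform_max_indep_exponential_general P φ hφ M V C hM hV hC hCnonneg hVexp hindep s hs
    hsφ
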